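/- Define polynomials p_n(x) = Σ_{k=0}^{n} [n choose k]_q · [n]_q[n−1]_q⋯[n−k+1]_q · (−1)^k x^{n−k} q^{binom(k−1,2)−1}. Then these monic polynomials satisfy the three-term recurrence p_{n+1}(x) = (x − b_n) p_n(x) − λ_n p_{n−1}(x) with b_n = q^{n−1}[n+1]_q + q^{n−1}[n]_q and λ_n = q^{2n−3}([n]_q)^2. -/
import Mathlib

open Finset

namespace SS

variable {n : ℕ}

/-- `descB σ j = true` iff there is a descent between positions `j` and `j+1`
in the word `σ(1)σ(2)⋯σ(n)`. -/
def descB (σ : Equiv.Perm (Fin n)) (j : ℕ) : Bool :=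
  if h : j + 1 < n then decide ((σ ⟨j+1, h⟩) < σ ⟨j, Nat.lt_of_succ_lt h⟩) else false

/-- The index of the maximal increasing run containing position `p`. -/
def runIdx (σ : Equiv.Perm (Fin n)) (p : ℕ) : ℕ :=
  ((Finset.range p).filter (fun j => descB σ j = true)).card

/-- The index of the run containing the value `v`. -/
def runOf (σ : Equiv.Perm (Fin n)) (v : Fin n) : ℕ := runIdx σ (σ.symm v).val

/-- The number of maximal increasing runs of `σ`. -/
def runCount (σ : Equiv.Perm (Fin n)) : ℕ :=
  if n = 0 then 0 else runIdx σ n + 1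

/-- `lsgAt σ v` : number of runs strictly to the left of (the run of) `v`
containing both an element smaller than `v` and an element greater than `v`. -/
def lsgAt (σ : Equiv.Perm (Fin n)) (v : Fin n) : ℕ :=
  ((Finset.range (runCount σ)).filter (fun r => r < runOf σ v ∧
      (∃ a : Fin n, runOf σ a = r ∧ a < v) ∧ (∃ b : Fin n, runOf σ b = r ∧ v < b))).card

/-- `rsgAt σ v` : number of runs strictly to the right of `v`
containing both an element smaller than `v` and an element greater than `v`. -/
def rsgAt (σ : Equiv.Perm (Fin n)) (v : Fin n) : ℕ :=
  ((Finset.range (runCount σ)).filter (fun r => runOf σ v < r ∧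
      (∃ a : Fin n, runOf σ a = r ∧ a < v) ∧ (∃ b : Fin n, runOf σ b = r ∧ v < b))).card

def lsg (σ : Equiv.Perm (Fin n)) : ℕ := ∑ v : Fin n, lsgAt σ v
def rsg (σ : Equiv.Perm (Fin n)) : ℕ := ∑ v : Fin n, rsgAt σ v

/-- position `p` begins a maximal increasing run. -/
def startsB (σ : Equiv.Perm (Fin n)) (p : ℕ) : Bool := p == 0 || descB σ (p - 1)

/-- position `p` ends a maximal increasing run. -/
def endsB (σ : Equiv.Perm (Fin n)) (p : ℕ) : Bool := p + 1 == n || descB σ p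

def openerB (σ : Equiv.Perm (Fin n)) (v : Fin n) : Bool :=
  startsB σ (σ.symm v).val && !endsB σ (σ.symm v).val
def closerB (σ : Equiv.Perm (Fin n)) (v : Fin n) : Bool :=
  endsB σ (σ.symm v).val && !startsB σ (σ.symm v).val
def singB (σ : Equiv.Perm (Fin n)) (v : Fin n) : Bool :=
  startsB σ (σ.symm v).val && endsB σ (σ.symm v).val
def contB (σ : Equiv.Perm (Fin n)) (v : Fin n) : Bool :=
  !startsB σ (σ.symm v).val && !endsB σ (σ.symm v).val

def lsgOp (σ : Equiv.Perm (Fin n)) : ℕ :=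
  ∑ v ∈ univ.filter (fun v : Fin n => openerB σ v = true), lsgAt σ v
def rsgOp (σ : Equiv.Perm (Fin n)) : ℕ :=
  ∑ v ∈ univ.filter (fun v : Fin n => openerB σ v = true), rsgAt σ v
def lsgClos (σ : Equiv.Perm (Fin n)) : ℕ :=
  ∑ v ∈ univ.filter (fun v : Fin n => closerB σ v = true), lsgAt σ v
def rsgClos (σ : Equiv.Perm (Fin n)) : ℕ :=
  ∑ v ∈ univ.filter (fun v : Fin n => closerB σ v = true), rsgAt σ v
def lsgSing (σ : Equiv.Perm (Fin n)) : ℕ :=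
  ∑ v ∈ univ.filter (fun v : Fin n => singB σ v = true), lsgAt σ v
def rsgSing (σ : Equiv.Perm (Fin n)) : ℕ :=
  ∑ v ∈ univ.filter (fun v : Fin n => singB σ v = true), rsgAt σ v
def lsgCont (σ : Equiv.Perm (Fin n)) : ℕ :=
  ∑ v ∈ univ.filter (fun v : Fin n => contB σ v = true), lsgAt σ v
def rsgCont (σ : Equiv.Perm (Fin n)) : ℕ :=
  ∑ v ∈ univ.filter (fun v : Fin n => contB σ v = true), rsgAt σ v

/-- `[m]_q = 1 + q + ⋯ + q^{m-1}`. -/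
def qint {R : Type*} [CommRing R] (q : R) (m : ℕ) : R := ∑ i ∈ Finset.range m, q ^ i

/-- `[n]_q! = [1]_q [2]_q ⋯ [n]_q`. -/
def qfact {R : Type*} [CommRing R] (q : R) (n : ℕ) : R := ∏ m ∈ Finset.range n, qint q (m+1)

/-- `moment b lam l h` : sum of the weights of all weighted Motzkin paths with `l` steps
starting at height `h` and ending at height `0`, where up steps have weight `1`,
a level step at height `k` has weight `b k`, and a down step from height `k`
has weight `lam k`.  The `n`th moment of the corresponding monic orthogonal
polynomial sequence is `moment b lam n 0`. -/
def moment {R : Type*} [CommRing R] (b lam : ℕ → R) : ℕ → ℕ → R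
  | 0, h => if h = 0 then 1 else 0
  | (l+1), h => moment b lam l (h+1) + b h * moment b lam l h +
      (if h = 0 then 0 else lam h * moment b lam l (h-1))

end SS
namespace SS

/-- Gaussian binomial coefficient `[n choose k]_q`. -/
noncomputable def qbinom (q : ℝ) (n k : ℕ) : ℝ := qfact q n / (qfact q k * qfact q (n - k))

/-- The monic little `q`-Jacobi polynomials `p_n(xq(1-q);1,0;q)`:
`p_n(x) = Σ_k [n choose k]_q [n]_q⋯[n-k+1]_q (-1)^k x^{n-k} q^{C(k-1,2)-1}`. -/
noncomputable def pTen (q : ℝ) (n : ℕ) (x : ℝ) : ℝ :=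
  ∑ k ∈ Finset.range (n + 1),
    qbinom q n k * (∏ j ∈ Finset.range k, qint q (n - j)) * (-1) ^ k * x ^ (n - k) *
      q ^ (((k : ℤ) - 1) * ((k : ℤ) - 2) / 2 - 1)

end SS

namespace Aux10
open SS

variable {q : ℝ}

lemma qint_zero : qint q 0 = 0 := by simp [qint]
lemma qint_one : qint q 1 = 1 := by simp [qint]

lemma qint_pos (h0 : 0 < q) (m : ℕ) : 0 < qint q (m+1) := by
  apply Finset.sum_pos (fun i _ => pow_pos h0 i)
  simp

lemma qfact_pos (h0 : 0 < q) (n : ℕ) : 0 < qfact q n :=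
  Finset.prod_pos (fun m _ => qint_pos h0 m)

lemma qfact_ne (h0 : 0 < q) (n : ℕ) : qfact q n ≠ 0 := (qfact_pos h0 n).ne'

lemma qfact_one : qfact q 1 = 1 := by simp [qfact, qint]

lemma qfact_succ (n : ℕ) : qfact q (n+1) = qfact q n * qint q (n+1) :=
  Finset.prod_range_succ _ _

lemma qint_add (a b : ℕ) : qint q (a+b) = qint q a + q^a * qint q b := by
  unfold qint
  rw [Finset.sum_range_add, Finset.mul_sum]
  simp [pow_add]

lemma prod_qint : ∀ k n : ℕ, k ≤ n →
    (∏ j ∈ Finset.range k, qint q (n - j)) * qfact q (n-k) = qfact q n := by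
  intro k
  induction k with
  | zero => simp
  | succ k ih =>
    intro n hk
    rw [Finset.prod_range_succ, mul_assoc]
    have h2 : qint q (n - k) * qfact q (n - (k+1)) = qfact q (n - k) := by
      rw [mul_comm, show n - k = (n - (k+1)) + 1 by omega, qfact_succ]
    rw [h2, ih n (by omega)]

/-- triangular numbers -/
def Tn (j : ℕ) : ℕ := ∑ i ∈ Finset.range j, i

lemma Tn_succ (j : ℕ) : Tn (j+1) = Tn j + j := Finset.sum_range_succ _ _

lemma two_Tn (j : ℕ) : ((j:ℤ) - 1) * ((j:ℤ) - 2) = 2 * ((Tn j : ℤ) - j + 1) := by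
  induction j with
  | zero => simp [Tn]
  | succ j ih =>
    rw [Tn_succ]
    push_cast
    push_cast at ih
    linear_combination ih

lemma eT (k : ℕ) : ((k:ℤ) - 1) * ((k:ℤ) - 2) / 2 - 1 = (Tn k : ℤ) - k := by
  rw [two_Tn, Int.mul_ediv_cancel_left _ two_ne_zero]; ring

lemma qE (hq : q ≠ 0) (k : ℕ) :
    q ^ (((k:ℤ) - 1) * ((k:ℤ) - 2) / 2 - 1) = q ^ Tn k / q ^ k := by
  rw [eT, zpow_sub₀ hq, zpow_natCast, zpow_natCast]

lemma zq1 (hq : q ≠ 0) (n : ℕ) : q ^ ((n:ℤ) - 1) = q ^ n / q := by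
  rw [zpow_sub₀ hq, zpow_natCast, zpow_one]

lemma zq2 (hq : q ≠ 0) (n : ℕ) : q ^ (2*(n:ℤ) - 3) = q ^ (2*n) / q^3 := by
  rw [zpow_sub₀ hq, show (2*(n:ℤ)) = ((2*n : ℕ) : ℤ) by push_cast; ring, zpow_natCast,
    show (3:ℤ) = ((3:ℕ):ℤ) by norm_num, zpow_natCast]

/-- the coefficient of `x^(n-k)` in `pTen q n`. -/
noncomputable def Ac (q : ℝ) (n k : ℕ) : ℝ :=
  qbinom q n k * (∏ j ∈ Finset.range k, qint q (n - j)) * (-1)^k *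
    q ^ (((k:ℤ) - 1) * ((k:ℤ) - 2) / 2 - 1)

lemma pTen_eq (n : ℕ) (x : ℝ) :
    pTen q n x = ∑ k ∈ Finset.range (n+1), Ac q n k * x^(n-k) := by
  unfold pTen Ac
  exact Finset.sum_congr rfl (fun k _ => by ring)

lemma Ac_eq (h0 : 0 < q) {n k : ℕ} (hkn : k ≤ n) :
    Ac q n k = (-1)^k * ((qfact q n)^2 / (qfact q k * (qfact q (n-k))^2)) *
      (q ^ Tn k / q ^ k) := by
  unfold Ac qbinom
  rw [qE h0.ne']
  have hp : (∏ j ∈ Finset.range k, qint q (n - j)) = qfact q n / qfact q (n-k) := by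
    rw [eq_div_iff (qfact_ne h0 _), prod_qint k n hkn]
  rw [hp]
  field_simp

lemma key0 (h0 : 0 < q) (n : ℕ) : Ac q n 0 = 1 := by
  rw [Ac_eq h0 (Nat.zero_le n)]
  have h1 : qfact q 0 = 1 := by simp [qfact]
  simp [Tn, h1, div_self (pow_ne_zero 2 (qfact_ne h0 n))]

end Aux10

namespace SSkey
open SS Aux10

variable {q : ℝ}

lemma key1 (h0 : 0 < q) (s : ℕ) :
    Ac q (s+2) 1 = Ac q (s+1) 1
      - (q ^ (((s+1:ℕ):ℤ)-1) * qint q (s+2) + q ^ (((s+1:ℕ):ℤ)-1) * qint q (s+1)) *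
        Ac q (s+1) 0 := by
  have hq := h0.ne'
  rw [key0 h0, Ac_eq h0 (show 1 ≤ s+2 by omega), Ac_eq h0 (show 1 ≤ s+1 by omega), zq1 hq]
  simp only [show s+2-1 = s+1 from rfl, show s+1-1 = s from rfl]
  have hs2 : s+2 = (s+1)+1 := rfl
  rw [hs2, qfact_succ (s+1), qfact_succ s, qint_add (s+1) 1, qint_one, qfact_one, mul_one]
  have ht : Tn 1 = 0 := by simp [Tn]
  rw [ht]
  have h1 : qfact q s ≠ 0 := qfact_ne h0 s
  have h2 : qfact q (s+1) ≠ 0 := qfact_ne h0 (s+1)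
  have h3 : qint q (s+1) ≠ 0 := (qint_pos h0 s).ne'
  field_simp
  ring

lemma keytop (h0 : 0 < q) (s : ℕ) :
    Ac q (s+2) (s+2) =
      - (q ^ (((s+1:ℕ):ℤ)-1) * qint q (s+2) + q ^ (((s+1:ℕ):ℤ)-1) * qint q (s+1)) *
          Ac q (s+1) (s+1)
      - q ^ (2*((s+1:ℕ):ℤ)-3) * (qint q (s+1))^2 * Ac q s s := by
  have hq := h0.ne'
  rw [Ac_eq h0 (le_refl (s+2)), Ac_eq h0 (le_refl (s+1)), Ac_eq h0 (le_refl s),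
    zq1 hq, zq2 hq]
  simp only [Nat.sub_self]
  have h1 : qfact q 0 = 1 := by simp [qfact]
  rw [h1]
  rw [Tn_succ (s+1), Tn_succ s]
  have hs2 : s+2 = (s+1)+1 := rfl
  rw [hs2, qfact_succ (s+1), qfact_succ s]
  have h2 : qfact q s ≠ 0 := qfact_ne h0 s
  have h3 : qint q (s+1) ≠ 0 := (qint_pos h0 s).ne'
  have h4 : qint q (s+1+1) ≠ 0 := (qint_pos h0 (s+1)).ne'
  field_simp
  rw [qint_add (s+1) 1, qint_one, mul_one]
  ring

lemma keymain (h0 : 0 < q) (s k : ℕ) (hk : k + 2 ≤ s + 1) :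
    Ac q (s+2) (k+2) = Ac q (s+1) (k+2)
      - (q ^ (((s+1:ℕ):ℤ)-1) * qint q (s+2) + q ^ (((s+1:ℕ):ℤ)-1) * qint q (s+1)) *
          Ac q (s+1) (k+1)
      - q ^ (2*((s+1:ℕ):ℤ)-3) * (qint q (s+1))^2 * Ac q s k := by
  have hq := h0.ne'
  obtain ⟨m, rfl⟩ : ∃ m, s = m + k + 1 := ⟨s - k - 1, by omega⟩
  rw [Ac_eq h0 (show k+2 ≤ m+k+1+2 by omega), Ac_eq h0 (show k+2 ≤ m+k+1+1 by omega),
    Ac_eq h0 (show k+1 ≤ m+k+1+1 by omega), Ac_eq h0 (show k ≤ m+k+1 by omega),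
    zq1 hq, zq2 hq]
  simp only [show m+k+1+2-(k+2) = m+1 by omega, show m+k+1+1-(k+2) = m by omega,
    show m+k+1+1-(k+1) = m+1 by omega, show m+k+1-k = m+1 by omega]
  -- expand factorials and q-integers
  rw [show m+k+1+2 = (m+k+1+1)+1 by omega, qfact_succ (m+k+1+1), qfact_succ (m+k+1),
    Tn_succ (k+1), Tn_succ k]
  rw [show m+k+1+1+1 = (m+1)+(k+2) by omega, qint_add (m+1) (k+2)]
  rw [show m+k+1+1 = (m+1)+(k+1) by omega, qint_add (m+1) (k+1)]
  rw [show k+2 = (k+1)+1 by omega, qfact_succ (k+1), qfact_succ k, qfact_succ m]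
  have h1 : qfact q m ≠ 0 := qfact_ne h0 m
  have h2 : qfact q k ≠ 0 := qfact_ne h0 k
  have h3 : qfact q (m+k+1) ≠ 0 := qfact_ne h0 (m+k+1)
  have h4 : qint q (m+1) ≠ 0 := (qint_pos h0 m).ne'
  have h5 : qint q (k+1) ≠ 0 := (qint_pos h0 k).ne'
  have h6 : qint q ((k+1)+1) ≠ 0 := (qint_pos h0 (k+1)).ne'
  have h7 : qint q (m+1) + q^(m+1) * qint q ((k+1)+1) ≠ 0 :=
    (add_pos (qint_pos h0 m) (mul_pos (pow_pos h0 (m+1)) (qint_pos h0 (k+1)))).ne'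
  have h8 : qint q (m+1) + q^(m+1) * qint q (k+1) ≠ 0 :=
    (add_pos (qint_pos h0 m) (mul_pos (pow_pos h0 (m+1)) (qint_pos h0 k))).ne'
  field_simp
  ring

end SSkey

namespace SSkey
open SS Aux10

lemma shift1 (f : ℕ → ℝ) (N : ℕ) (hf0 : f 0 = 0) :
    ∑ K ∈ Finset.range (N+1), f K = ∑ k ∈ Finset.range N, f (k+1) := by
  rw [Finset.sum_range_succ' f N]
  simp [hf0]

lemma shift2 (f : ℕ → ℝ) (N : ℕ) (hf0 : f 0 = 0) (hf1 : f 1 = 0) :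
    ∑ K ∈ Finset.range (N+2+1), f K = ∑ k ∈ Finset.range (N+1), f (k+2) := by
  rw [Finset.sum_range_succ' f (N+2), show N+2 = (N+1)+1 from rfl,
    Finset.sum_range_succ' (fun i => f (i+1)) (N+1)]
  simp [hf0, hf1]

end SSkey


open SS in
/-- The polynomials `pTen` satisfy the three-term recurrence with
`b_n = q^{n-1}[n+1]_q + q^{n-1}[n]_q` and `λ_n = q^{2n-3}[n]_q^2`. -/
theorem stmt10 (q : ℝ) (h0 : 0 < q) (h1 : q < 1) (x : ℝ) :
    pTen q 1 x = x - (q ^ ((0 : ℤ) - 1) * qint q 1 + q ^ ((0 : ℤ) - 1) * qint q 0) ∧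
    ∀ n : ℕ, 1 ≤ n →
      pTen q (n + 1) x =
        (x - (q ^ ((n : ℤ) - 1) * qint q (n + 1) + q ^ ((n : ℤ) - 1) * qint q n)) * pTen q n x
          - q ^ (2 * (n : ℤ) - 3) * (qint q n) ^ 2 * pTen q (n - 1) x := by
  open Aux10 SSkey in
  have hq : q ≠ 0 := h0.ne'
  constructor
  · rw [pTen_eq, Finset.sum_range_succ, Finset.sum_range_succ, Finset.sum_range_zero,
      key0 h0]
    have hA : Ac q 1 1 = -(1/q) := by
      rw [Ac_eq h0 (le_refl 1), Nat.sub_self]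
      have h1' : qfact q 0 = 1 := by simp [qfact]
      have ht : Tn 1 = 0 := by simp [Tn]
      rw [h1', ht, qfact_one]
      norm_num
    rw [hA, qint_one, qint_zero, show (0:ℤ)-1 = -1 by norm_num, zpow_neg_one]
    simp
    field_simp
    ring
  · intro n hn
    obtain ⟨s, rfl⟩ : ∃ s, n = s + 1 := ⟨n-1, by omega⟩
    simp only [Nat.add_sub_cancel, show s+1+1 = s+2 from rfl]
    rw [pTen_eq (s+2)]
    have P1 : pTen q (s+1) x = ∑ k ∈ Finset.range (s+2), Ac q (s+1) k * x^(s+1-k) := by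
      rw [pTen_eq]
    rw [P1, pTen_eq s]
    have hstep : ∀ K ∈ Finset.range (s+2+1),
        Ac q (s+2) K * x^(s+2-K) =
          (if K ≤ s+1 then Ac q (s+1) K * x^(s+2-K) else 0)
          - (if 1 ≤ K then
              (q ^ (((s+1:ℕ):ℤ)-1) * qint q (s+2) + q ^ (((s+1:ℕ):ℤ)-1) * qint q (s+1)) *
                Ac q (s+1) (K-1) * x^(s+2-K) else 0)
          - (if 2 ≤ K then
              q ^ (2*((s+1:ℕ):ℤ)-3) * (qint q (s+1))^2 * Ac q s (K-2) * x^(s+2-K) else 0) := by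
      intro K hK
      rw [Finset.mem_range] at hK
      match K, hK with
      | 0, _ =>
        rw [if_pos (by omega), if_neg (by omega), if_neg (by omega), key0 h0, key0 h0]
        ring
      | 1, _ =>
        rw [if_pos (by omega), if_pos (by omega), if_neg (by omega),
          show (1:ℕ)-1 = 0 from rfl, key1 h0 s]
        ring
      | (k+2), hK =>
        by_cases hks : k + 2 ≤ s + 1
        · rw [if_pos hks, if_pos (by omega), if_pos (by omega),
            show k+2-1 = k+1 from rfl, show k+2-2 = k from rfl, keymain h0 s k hks]
          ring
        · have hk2 : k = s := by omega
          subst hk2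
          rw [if_neg hks, if_pos (by omega), if_pos (by omega),
            show k+2-1 = k+1 from rfl, show k+2-2 = k from rfl, keytop h0 k]
          ring
    rw [Finset.sum_congr rfl hstep, Finset.sum_sub_distrib, Finset.sum_sub_distrib]
    have E1 : ∑ K ∈ Finset.range (s+2+1),
        (if K ≤ s+1 then Ac q (s+1) K * x^(s+2-K) else 0)
        = x * ∑ k ∈ Finset.range (s+2), Ac q (s+1) k * x^(s+1-k) := by
      rw [Finset.sum_range_succ, if_neg (by omega), add_zero, Finset.mul_sum]
      refine Finset.sum_congr rfl (fun k hk => ?_)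
      rw [Finset.mem_range] at hk
      rw [if_pos (by omega), show s+2-k = (s+1-k)+1 by omega, pow_succ]
      ring
    have E2 : ∑ K ∈ Finset.range (s+2+1),
        (if 1 ≤ K then
          (q ^ (((s+1:ℕ):ℤ)-1) * qint q (s+2) + q ^ (((s+1:ℕ):ℤ)-1) * qint q (s+1)) *
            Ac q (s+1) (K-1) * x^(s+2-K) else 0)
        = (q ^ (((s+1:ℕ):ℤ)-1) * qint q (s+2) + q ^ (((s+1:ℕ):ℤ)-1) * qint q (s+1)) *
            ∑ k ∈ Finset.range (s+2), Ac q (s+1) k * x^(s+1-k) := by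
      rw [shift1 _ (s+2) (by rw [if_neg (by omega)]), Finset.mul_sum]
      refine Finset.sum_congr rfl (fun k hk => ?_)
      rw [Finset.mem_range] at hk
      rw [if_pos (by omega), Nat.add_sub_cancel, show s+2-(k+1) = s+1-k by omega]
      ring
    have E3 : ∑ K ∈ Finset.range (s+2+1),
        (if 2 ≤ K then
          q ^ (2*((s+1:ℕ):ℤ)-3) * (qint q (s+1))^2 * Ac q s (K-2) * x^(s+2-K) else 0)
        = q ^ (2*((s+1:ℕ):ℤ)-3) * (qint q (s+1))^2 *
            ∑ k ∈ Finset.range (s+1), Ac q s k * x^(s-k) := by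
      rw [shift2 _ s (by rw [if_neg (by omega)]) (by rw [if_neg (by omega)]), Finset.mul_sum]
      refine Finset.sum_congr rfl (fun k hk => ?_)
      rw [Finset.mem_range] at hk
      rw [if_pos (by omega), show k+2-2 = k from rfl, show s+2-(k+2) = s-k by omega]
      ring
    rw [E1, E2, E3]
    ring
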